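/- arXiv:1608.03195 — 5 statements merged into one kernel-verified Lean document; each statement's English description precedes it below -/
import Mathlib

section
/- If a finite state machine M is parametrically Ω-diagnosable with parameters τ, δ, T, γ₁, γ₂, then M is parametrically Ω-diagnosable with any parameters τ', δ', T', γ₁', γ₂' satisfying τ' ≥ τ, δ' ≥ δ, T' ≤ T, γ₁' ≥ γ₁, γ₂' ≥ γ₂, and γ₂' ≤ δ'. -/
open Set

/-- A finite state machine: initial states, output function, transition relation. -/
structure FSM (X Y : Type*) where
  X0 : Set X
  H : X → Y
  Tr : X → X → Prop

namespace FSM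

variable {X Y : Type*}

/-- Liveness: every state has a successor. -/
def Live (M : FSM X Y) : Prop := ∀ i, ∃ j, M.Tr i j

/-- Infinite state execution starting from an initial state (0-based indexing:
index `k` corresponds to the paper's step `k+1`). -/
def IsExec (M : FSM X Y) (x : ℕ → X) : Prop :=
  x 0 ∈ M.X0 ∧ ∀ k, M.Tr (x k) (x (k + 1))

/-- Finite state execution of length `n` (positions `0, …, n-1`). -/
def IsFinExec (M : FSM X Y) (x : ℕ → X) (n : ℕ) : Prop :=
  ∀ k, k + 1 < n → M.Tr (x k) (x (k + 1))

/-- `kx` is the first step at which `x` is in `Ω`. -/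
def FirstCross (Ω : Set X) (x : ℕ → X) (kx : ℕ) : Prop :=
  x kx ∈ Ω ∧ ∀ h < kx, x h ∉ Ω

/-- The outputs of `x'` agree with those of `x` on all indices `≤ n`
(i.e. on the prefix of length `n+1`, the paper's prefix of 1-based length `n+1`). -/
def AgreeUpTo (M : FSM X Y) (x x' : ℕ → X) (n : ℕ) : Prop :=
  ∀ m ≤ n, M.H (x' m) = M.H (x m)

/-- Parametric Ω-diagnosability with parameters τ, δ, T, γ₁, γ₂ (0-based translation
of Definition 2.1: the paper's step `k ∈ [max{k_x, τ+1}, k_x+T]` is index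
`k ∈ [max{k_x, τ}, k_x+T]`, the prefix of length `k+δ` (1-based) is indices `≤ k+δ`,
and the window `[max{1,k-γ₁}, k+γ₂]` is `[k ∸ γ₁, k+γ₂]`). -/
def ParamDiag (M : FSM X Y) (Ω : Set X) (τ δ : ℕ) (T : ℕ∞) (γ₁ γ₂ : ℕ) : Prop :=
  γ₂ ≤ δ ∧
  ∀ x, M.IsExec x → ∀ kx, FirstCross Ω x kx →
    ∀ k, x k ∈ Ω → max kx τ ≤ k → (k : ℕ∞) ≤ (kx : ℕ∞) + T →
      ∀ x', M.IsExec x' → M.AgreeUpTo x x' (k + δ) →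
        ∃ h, k - γ₁ ≤ h ∧ h ≤ k + γ₂ ∧ x' h ∈ Ω

/-- Ω-diagnosability with delay `δ` and uncertainties `γ₁`, `γ₂` (Definition 2.3). -/
def OmegaDiagWith (M : FSM X Y) (Ω : Set X) (δ γ₁ γ₂ : ℕ) : Prop :=
  γ₂ ≤ δ ∧
  ∀ x, M.IsExec x → ∀ kx, FirstCross Ω x kx →
    ∀ x', M.IsExec x' → M.AgreeUpTo x x' (kx + δ) →
      ∃ h, kx - γ₁ ≤ h ∧ h ≤ kx + γ₂ ∧ x' h ∈ Ω

/-- Ω-diagnosability. -/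
def OmegaDiag (M : FSM X Y) (Ω : Set X) : Prop :=
  ∃ δ γ₁ γ₂, M.OmegaDiagWith Ω δ γ₁ γ₂

/-- Eventual Ω-diagnosability with parameters τ, δ, γ₁, γ₂ (Definition 2.4). -/
def EventDiagWith (M : FSM X Y) (Ω : Set X) (τ δ γ₁ γ₂ : ℕ) : Prop :=
  γ₂ ≤ δ ∧
  ∀ x, M.IsExec x → ∀ kx, FirstCross Ω x kx →
    ∀ k, x k ∈ Ω → max kx τ ≤ k →
      ∀ x', M.IsExec x' → M.AgreeUpTo x x' (k + δ) →
        ∃ h, k - γ₁ ≤ h ∧ h ≤ k + γ₂ ∧ x' h ∈ Ω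

/-- Eventual Ω-diagnosability. -/
def EventDiag (M : FSM X Y) (Ω : Set X) : Prop :=
  ∃ τ δ γ₁ γ₂, M.EventDiagWith Ω τ δ γ₁ γ₂

/-- Critical Ω-diagnosability: the eventual property with τ = 0 (Definition 2.5). -/
def CritDiag (M : FSM X Y) (Ω : Set X) : Prop :=
  ∃ δ γ₁ γ₂, M.EventDiagWith Ω 0 δ γ₁ γ₂

/-- Critical Ω-observability: any crossing event is detected with no delay,
no transient and no uncertainty. -/
def CritObs (M : FSM X Y) (Ω : Set X) : Prop :=
  ∀ x, M.IsExec x → ∀ k, x k ∈ Ω →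
    ∀ x', M.IsExec x' → M.AgreeUpTo x x' k → x' k ∈ Ω

/-- Ω-initial state observability: Ω-diagnosability with γ₁ = γ₂ = 0. -/
def InitStateObs (M : FSM X Y) (Ω : Set X) : Prop :=
  ∃ δ : ℕ, ∀ x, M.IsExec x → ∀ kx, FirstCross Ω x kx →
    ∀ x', M.IsExec x' → M.AgreeUpTo x x' (kx + δ) → x' kx ∈ Ω

/-- Π : the pairs of states with equal output. -/
def Pairs (M : FSM X Y) : Set (X × X) := {p | M.H p.1 = M.H p.2}

/-- The two length-`n` executions are indistinguishable (equal output strings). -/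
def Indist (M : FSM X Y) (x₁ x₂ : ℕ → X) (n : ℕ) : Prop :=
  ∀ h < n, M.H (x₁ h) = M.H (x₂ h)

/-- S* : pairs of states reachable from X₀ by two indistinguishable executions. -/
def Sstar (M : FSM X Y) : Set (X × X) :=
  {p | ∃ n ≥ 1, ∃ x₁ x₂, M.IsFinExec x₁ n ∧ M.IsFinExec x₂ n ∧
    x₁ 0 ∈ M.X0 ∧ x₂ 0 ∈ M.X0 ∧ x₁ (n - 1) = p.1 ∧ x₂ (n - 1) = p.2 ∧ M.Indist x₁ x₂ n}

/-- F_k : the k-forward indistinguishable pairs (k ≥ 1). -/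
def Fset (M : FSM X Y) (k : ℕ) : Set (X × X) :=
  {p | ∃ x₁ x₂, M.IsFinExec x₁ k ∧ M.IsFinExec x₂ k ∧
    x₁ 0 = p.1 ∧ x₂ 0 = p.2 ∧ M.Indist x₁ x₂ k}

/-- F* : pairs that are k-forward indistinguishable for every k ≥ 1. -/
def Fstar (M : FSM X Y) : Set (X × X) := ⋂ k ≥ 1, M.Fset k

/-- B_k(Σ) : the k-backward indistinguishable pairs in Σ (k ≥ 1). -/
def Bset (M : FSM X Y) (Sig : Set (X × X)) (k : ℕ) : Set (X × X) :=
  {p | ∃ x₁ x₂, M.IsFinExec x₁ k ∧ M.IsFinExec x₂ k ∧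
    x₁ (k - 1) = p.1 ∧ x₂ (k - 1) = p.2 ∧
    (∀ h < k, (x₁ h, x₂ h) ∈ Sig) ∧ M.Indist x₁ x₂ k}

/-- B*(Σ) : pairs of Σ that are k-backward indistinguishable in Σ for every k ≥ 1. -/
def Bstar (M : FSM X Y) (Sig : Set (X × X)) : Set (X × X) := ⋂ k ≥ 1, M.Bset Sig k

/-- Λ_k : pairs (i,j) ∈ S* with exactly one state in Ω, admitting indistinguishable
length-k executions from i and j such that the one starting at the non-Ω state
stays out of Ω. -/
def Lset (M : FSM X Y) (Ω : Set X) (k : ℕ) : Set (X × X) :=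
  {p | p ∈ M.Sstar ∧ ∃ x₁ x₂, M.IsFinExec x₁ k ∧ M.IsFinExec x₂ k ∧
    x₁ 0 = p.1 ∧ x₂ 0 = p.2 ∧ M.Indist x₁ x₂ k ∧
    ((p.1 ∈ Ω ∧ p.2 ∉ Ω ∧ ∀ h < k, x₂ h ∉ Ω) ∨
     (p.2 ∈ Ω ∧ p.1 ∉ Ω ∧ ∀ h < k, x₁ h ∉ Ω))}

/-- Λ* : pairs belonging to Λ_k for arbitrarily large k. -/
def Lstar (M : FSM X Y) (Ω : Set X) : Set (X × X) :=
  {p | p ∈ M.Sstar ∧ ∀ K : ℕ, ∃ k ≥ K, p ∈ M.Lset Ω k}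

/-- Γ_k : pairs (i,j) ∈ S* with exactly one state in Ω, which are the final states
of indistinguishable length-k executions whose position-pairs all lie in S* and
such that the one ending at the non-Ω state stays out of Ω. -/
def Gset (M : FSM X Y) (Ω : Set X) (k : ℕ) : Set (X × X) :=
  {p | p ∈ M.Sstar ∧ ∃ x₁ x₂, M.IsFinExec x₁ k ∧ M.IsFinExec x₂ k ∧
    x₁ (k - 1) = p.1 ∧ x₂ (k - 1) = p.2 ∧ M.Indist x₁ x₂ k ∧
    (∀ h < k, (x₁ h, x₂ h) ∈ M.Sstar) ∧
    ((p.1 ∈ Ω ∧ p.2 ∉ Ω ∧ ∀ h < k, x₂ h ∉ Ω) ∨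
     (p.2 ∈ Ω ∧ p.1 ∉ Ω ∧ ∀ h < k, x₁ h ∉ Ω))}

/-- Γ* : pairs belonging to Γ_k for arbitrarily large k. -/
def Gstar (M : FSM X Y) (Ω : Set X) : Set (X × X) :=
  {p | p ∈ M.Sstar ∧ ∀ K : ℕ, ∃ k ≥ K, p ∈ M.Gset Ω k}

/-- One step of the S-recursion: S ↦ {(i,j) ∈ Π : (pre(i) × pre(j)) ∩ S ≠ ∅} ∪ S. -/
def SstepOp (M : FSM X Y) (A : Set (X × X)) : Set (X × X) :=
  {p ∈ M.Pairs | ∃ q ∈ A, M.Tr q.1 p.1 ∧ M.Tr q.2 p.2} ∪ A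

/-- The S-recursion; `Srec M k` is the paper's `S_{k+1}` (so `Srec M 0 = S₁`). -/
def Srec (M : FSM X Y) : ℕ → Set (X × X)
  | 0 => (M.X0 ×ˢ M.X0) ∩ M.Pairs
  | k + 1 => M.SstepOp (M.Srec k)

/-- One step of the forward recursion: A ↦ {(i,j) ∈ A : (succ(i) × succ(j)) ∩ A ≠ ∅}. -/
def FstepOp (M : FSM X Y) (A : Set (X × X)) : Set (X × X) :=
  {p ∈ A | ∃ q ∈ A, M.Tr p.1 q.1 ∧ M.Tr p.2 q.2}

/-- The F-recursion; `Frec M k` is the paper's `F_{k+1}` (so `Frec M 0 = F₁ = Π`). -/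
def Frec (M : FSM X Y) : ℕ → Set (X × X)
  | 0 => M.Pairs
  | k + 1 => M.FstepOp (M.Frec k)

/-- One step of the backward recursion: A ↦ {(i,j) ∈ A : (pre(i) × pre(j)) ∩ A ≠ ∅}. -/
def BstepOp (M : FSM X Y) (A : Set (X × X)) : Set (X × X) :=
  {p ∈ A | ∃ q ∈ A, M.Tr q.1 p.1 ∧ M.Tr q.2 p.2}

/-- The B-recursion; `Brec M Σ k` is the paper's `B_{k+1}(Σ)` (so `Brec M Σ 0 = Σ`). -/
def Brec (M : FSM X Y) (Sig : Set (X × X)) : ℕ → Set (X × X)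
  | 0 => Sig
  | k + 1 => M.BstepOp (M.Brec Sig k)

/-- The Ψ-recursion; `Psirec M Ω k` is the paper's `Ψ_{k+1}` (so `Psirec M Ω 0 = Ψ₁`). -/
def Psirec (M : FSM X Y) (Ω : Set X) : ℕ → Set (X × X)
  | 0 => (Set.univ ×ˢ Ωᶜ) ∩ M.Sstar
  | k + 1 => M.FstepOp (M.Psirec Ω k)

/-- The FSM M̃ obtained from M by deleting all transitions out of Ω. -/
def tilde (M : FSM X Y) (Ω : Set X) : FSM X Y :=
  ⟨M.X0, M.H, fun i j => M.Tr i j ∧ i ∉ Ω⟩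

/-- Symmetric closure of a set of pairs. -/
def symcl (W : Set (X × X)) : Set (X × X) := W ∪ {p | p.swap ∈ W}

/-- Convergence index f* of the forward recursion. -/
noncomputable def fIdx (M : FSM X Y) : ℕ := sInf {f | 1 ≤ f ∧ M.Fset f = M.Fstar}

/-- Convergence index b* of the backward recursion on Σ. -/
noncomputable def bIdx (M : FSM X Y) (Sig : Set (X × X)) : ℕ :=
  sInf {b | 1 ≤ b ∧ M.Bset Sig b = M.Bstar Sig}

/-- Convergence index l* of the Λ-recursion. -/
noncomputable def lIdx (M : FSM X Y) (Ω : Set X) : ℕ :=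
  sInf {l | 1 ≤ l ∧ M.Lset Ω l = M.Lstar Ω}

/-- Convergence index g* of the Γ-recursion. -/
noncomputable def gIdx (M : FSM X Y) (Ω : Set X) : ℕ :=
  sInf {g | 1 ≤ g ∧ M.Gset Ω g = M.Gstar Ω}

end FSM

theorem FSM.AgreeUpTo.mono {X Y : Type*} {M : FSM X Y} {x x' : ℕ → X} {m n : ℕ}
    (hxx' : M.AgreeUpTo x x' n) (hmn : m ≤ n) : M.AgreeUpTo x x' m :=
  fun l hl => hxx' l (hl.trans hmn)

theorem param_diag_mono_general {X Y : Type*} (M : FSM X Y) (Ω : Set X)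
    (τ δ : ℕ) (T : ℕ∞) (γ₁ γ₂ : ℕ) (τ' δ' : ℕ) (T' : ℕ∞) (γ₁' γ₂' : ℕ)
    (h : M.ParamDiag Ω τ δ T γ₁ γ₂)
    (hτ : τ ≤ τ') (hδ : δ ≤ δ') (hT : T' ≤ T)
    (hγ₁ : γ₁ ≤ γ₁') (hγ₂ : γ₂ ≤ γ₂') (hγδ : γ₂' ≤ δ') :
    M.ParamDiag Ω τ' δ' T' γ₁' γ₂' := by
  refine ⟨hγδ, fun x hx kx hkx k hkΩ hk_start hk_end x' hx' hagree => ?_⟩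
  obtain ⟨j, hj_lower, hj_upper, hjΩ⟩ := h.2 x hx kx hkx k hkΩ
    ((max_le_max_left kx hτ).trans hk_start) (hk_end.trans (add_le_add_right hT _))
    x' hx' (hagree.mono (Nat.add_le_add_left hδ k))
  exact ⟨j, (Nat.sub_le_sub_left hγ₁ k).trans hj_lower,
    hj_upper.trans (Nat.add_le_add_left hγ₂ k), hjΩ⟩

/-- Proposition 2.2, monotonicity of parametric Ω-diagnosability. -/
theorem param_diag_mono {X Y : Type*} (M : FSM X Y) (hlive : M.Live) (Ω : Set X)
    (τ δ : ℕ) (T : ℕ∞) (γ₁ γ₂ : ℕ) (τ' δ' : ℕ) (T' : ℕ∞) (γ₁' γ₂' : ℕ)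
    (h : M.ParamDiag Ω τ δ T γ₁ γ₂)
    (hτ : τ ≤ τ') (hδ : δ ≤ δ') (hT : T' ≤ T)
    (hγ₁ : γ₁ ≤ γ₁') (hγ₂ : γ₂ ≤ γ₂') (hγδ : γ₂' ≤ δ') :
    M.ParamDiag Ω τ' δ' T' γ₁' γ₂' :=
  param_diag_mono_general M Ω τ δ T γ₁ γ₂ τ' δ' T' γ₁' γ₂' h hτ hδ hT hγ₁ hγ₂ hγδ
end

section
/- A finite state machine M is critically Ω-diagnosable if and only if it is both Ω-diagnosable and eventually Ω-diagnosable. -/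
open Set

/-- Proposition 2.6: M is critically Ω-diagnosable iff it is both
Ω-diagnosable and eventually Ω-diagnosable. -/
theorem crit_diag_iff {X Y : Type*} (M : FSM X Y) (hlive : M.Live) (Ω : Set X) :
    M.CritDiag Ω ↔ M.OmegaDiag Ω ∧ M.EventDiag Ω := by
  constructor
  · rintro ⟨δ, γ₁, γ₂, hγ, h⟩
    constructor
    · exact ⟨δ, γ₁, γ₂, hγ, fun x hx kx hkx x' hx' hag =>
        h x hx kx hkx kx hkx.1 (by simp) x' hx' hag⟩
    · exact ⟨0, δ, γ₁, γ₂, hγ, h⟩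
  · rintro ⟨⟨δ₀, γ₁₀, γ₂₀, hγ₀, h₀⟩, ⟨τ, δ, γ₁, γ₂, hγ, h⟩⟩
    refine ⟨max δ δ₀, max γ₁ (γ₁₀ + τ), max γ₂ γ₂₀, by omega, ?_⟩
    intro x hx kx hkx k hk hmax x' hx' hag
    rcases le_or_gt τ k with hτ | hτ
    · obtain ⟨hh, hh1, hh2, hh3⟩ := h x hx kx hkx k hk
        (by simp at hmax ⊢; omega) x' hx'
        (fun m hm => hag m (by omega))
      exact ⟨hh, by omega, by omega, hh3⟩
    · have hkxk : kx ≤ k := by simp at hmax; omega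
      obtain ⟨hh, hh1, hh2, hh3⟩ := h₀ x hx kx hkx x' hx'
        (fun m hm => hag m (by omega))
      exact ⟨hh, by omega, by omega, hh3⟩
end

section
/- If there exist b ∈ [1, b*], f ∈ [1, f*], g ∈ [1, g*], l ∈ [1, l*] such that B_b(S*) ∩ F_f ⊆ complement of (Γ_g ∩ Λ_l), then M is eventually Ω-diagnosable with τ = max{b, g} − 1, δ = max{f, l} − 1, γ₁ = g − 1, γ₂ = l − 1. Conversely, if M is eventually Ω-diagnosable, such b, f, g, l exist. -/
open Set

namespace FSM

variable {X Y : Type*}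

/-! ### Stabilization of antitone set sequences -/

lemma chain_subset {α : Type*} (A : ℕ → Set α)
    (hA : ∀ k, 1 ≤ k → A (k + 1) ⊆ A k) :
    ∀ m k, 1 ≤ m → m ≤ k → A k ⊆ A m := by
  intro m k hm hmk
  induction k, hmk using Nat.le_induction with
  | base => exact subset_rfl
  | succ k hk ih => exact (hA k (le_trans hm hk)).trans ih

lemma ev_const {α : Type*} [Finite α] (A : ℕ → Set α)
    (hA : ∀ k, 1 ≤ k → A (k + 1) ⊆ A k) :
    ∃ N, 1 ≤ N ∧ ∀ k, N ≤ k → A k = A N := by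
  have hchain := chain_subset A hA
  set f : ℕ → ℕ := fun k => (A (k + 1)).ncard with hfdef
  have hmono : ∀ m k, m ≤ k → f k ≤ f m := by
    intro m k hmk
    induction k, hmk using Nat.le_induction with
    | base => exact le_rfl
    | succ k hk ih =>
        exact le_trans (Set.ncard_le_ncard (hA (k + 1) (by omega)) (A (k + 1)).toFinite) ih
  have hne : (Set.range f).Nonempty := ⟨f 0, 0, rfl⟩
  obtain ⟨N, hNr⟩ : ∃ N, f N = sInf (Set.range f) := Nat.sInf_mem hne
  have hfconst : ∀ k, N ≤ k → f k = f N := by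
    intro k hk
    have h1 : f k ≤ f N := hmono N k hk
    have h2 : sInf (Set.range f) ≤ f k := Nat.sInf_le ⟨k, rfl⟩
    omega
  refine ⟨N + 1, by omega, fun k hk => ?_⟩
  have hsub : A k ⊆ A (N + 1) := hchain (N + 1) k (by omega) hk
  have hcard : (A (N + 1)).ncard ≤ (A k).ncard := by
    have hk1 : k - 1 + 1 = k := by omega
    have h1 : f (k - 1) = f N := hfconst (k - 1) (by omega)
    simp only [hfdef, hk1] at h1
    omega
  exact Set.eq_of_subset_of_ncard_le hsub hcard (A (N + 1)).toFinite

lemma Fset_anti (M : FSM X Y) (k : ℕ) : M.Fset (k + 1) ⊆ M.Fset k := by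
  rintro p ⟨x₁, x₂, h1, h2, e1, e2, hind⟩
  exact ⟨x₁, x₂, fun h hh => h1 h (by omega), fun h hh => h2 h (by omega), e1, e2,
    fun h hh => hind h (by omega)⟩

lemma Bset_anti (M : FSM X Y) (Sig : Set (X × X)) (k : ℕ) (hk : 1 ≤ k) :
    M.Bset Sig (k + 1) ⊆ M.Bset Sig k := by
  rintro p ⟨x₁, x₂, h1, h2, e1, e2, hS, hind⟩
  refine ⟨fun h => x₁ (h + 1), fun h => x₂ (h + 1), fun h hh => h1 (h + 1) (by omega),
    fun h hh => h2 (h + 1) (by omega), ?_, ?_, fun h hh => hS (h + 1) (by omega),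
    fun h hh => hind (h + 1) (by omega)⟩
  · show x₁ (k - 1 + 1) = p.1
    rw [Nat.sub_add_cancel hk]; exact e1
  · show x₂ (k - 1 + 1) = p.2
    rw [Nat.sub_add_cancel hk]; exact e2

lemma Lset_anti (M : FSM X Y) (Ω : Set X) (k : ℕ) : M.Lset Ω (k + 1) ⊆ M.Lset Ω k := by
  rintro p ⟨hpS, x₁, x₂, h1, h2, e1, e2, hind, hdisj⟩
  refine ⟨hpS, x₁, x₂, fun h hh => h1 h (by omega), fun h hh => h2 h (by omega), e1, e2,
    fun h hh => hind h (by omega), ?_⟩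
  rcases hdisj with ⟨a, b, c⟩ | ⟨a, b, c⟩
  · exact Or.inl ⟨a, b, fun h hh => c h (by omega)⟩
  · exact Or.inr ⟨a, b, fun h hh => c h (by omega)⟩

lemma Gset_anti (M : FSM X Y) (Ω : Set X) (k : ℕ) (hk : 1 ≤ k) :
    M.Gset Ω (k + 1) ⊆ M.Gset Ω k := by
  rintro p ⟨hpS, x₁, x₂, h1, h2, e1, e2, hind, hS, hdisj⟩
  refine ⟨hpS, fun h => x₁ (h + 1), fun h => x₂ (h + 1), fun h hh => h1 (h + 1) (by omega),
    fun h hh => h2 (h + 1) (by omega), ?_, ?_, fun h hh => hind (h + 1) (by omega),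
    fun h hh => hS (h + 1) (by omega), ?_⟩
  · show x₁ (k - 1 + 1) = p.1
    rw [Nat.sub_add_cancel hk]; exact e1
  · show x₂ (k - 1 + 1) = p.2
    rw [Nat.sub_add_cancel hk]; exact e2
  · rcases hdisj with ⟨a, b, c⟩ | ⟨a, b, c⟩
    · exact Or.inl ⟨a, b, fun h hh => c (h + 1) (by omega)⟩
    · exact Or.inr ⟨a, b, fun h hh => c (h + 1) (by omega)⟩

lemma exists_F_eq (M : FSM X Y) [Finite X] : ∃ f, 1 ≤ f ∧ M.Fset f = M.Fstar := by
  obtain ⟨N, hN1, hN⟩ := ev_const M.Fset (fun k _ => M.Fset_anti k)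
  refine ⟨N, hN1, Set.ext fun p => ?_⟩
  simp only [Fstar, Set.mem_iInter]
  constructor
  · intro hp k hk
    rcases le_or_gt N k with h | h
    · rw [hN k h]; exact hp
    · exact chain_subset M.Fset (fun k _ => M.Fset_anti k) k N hk (by omega) hp
  · intro hp
    exact hp N hN1

lemma exists_B_eq (M : FSM X Y) [Finite X] (Sig : Set (X × X)) :
    ∃ b, 1 ≤ b ∧ M.Bset Sig b = M.Bstar Sig := by
  obtain ⟨N, hN1, hN⟩ := ev_const (M.Bset Sig) (fun k hk => M.Bset_anti Sig k hk)
  refine ⟨N, hN1, Set.ext fun p => ?_⟩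
  simp only [Bstar, Set.mem_iInter]
  constructor
  · intro hp k hk
    rcases le_or_gt N k with h | h
    · rw [hN k h]; exact hp
    · exact chain_subset (M.Bset Sig) (fun k hk => M.Bset_anti Sig k hk) k N hk (by omega) hp
  · intro hp
    exact hp N hN1

lemma exists_L_eq (M : FSM X Y) [Finite X] (Ω : Set X) :
    ∃ l, 1 ≤ l ∧ M.Lset Ω l = M.Lstar Ω := by
  obtain ⟨N, hN1, hN⟩ := ev_const (M.Lset Ω) (fun k _ => M.Lset_anti Ω k)
  refine ⟨N, hN1, Set.ext fun p => ?_⟩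
  constructor
  · intro hp
    refine ⟨hp.1, fun K => ⟨max K N, le_max_left _ _, ?_⟩⟩
    rw [hN _ (le_max_right _ _)]; exact hp
  · rintro ⟨-, h⟩
    obtain ⟨k, hk, hpk⟩ := h N
    rwa [hN k hk] at hpk

lemma exists_G_eq (M : FSM X Y) [Finite X] (Ω : Set X) :
    ∃ g, 1 ≤ g ∧ M.Gset Ω g = M.Gstar Ω := by
  obtain ⟨N, hN1, hN⟩ := ev_const (M.Gset Ω) (fun k hk => M.Gset_anti Ω k hk)
  refine ⟨N, hN1, Set.ext fun p => ?_⟩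
  constructor
  · intro hp
    refine ⟨hp.1, fun K => ⟨max K N, le_max_left _ _, ?_⟩⟩
    rw [hN _ (le_max_right _ _)]; exact hp
  · rintro ⟨-, h⟩
    obtain ⟨k, hk, hpk⟩ := h N
    rwa [hN k hk] at hpk

end FSM

namespace FSM

variable {X Y : Type*}

/-! ### Forward direction -/

lemma forward_lemma (M : FSM X Y) (Ω : Set X) (b f g l : ℕ)
    (hb : 1 ≤ b) (hf : 1 ≤ f) (hg : 1 ≤ g) (hl : 1 ≤ l)
    (hsub : M.Bset M.Sstar b ∩ M.Fset f ⊆ (M.Gset Ω g ∩ M.Lset Ω l)ᶜ) :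
    M.EventDiagWith Ω (max b g - 1) (max f l - 1) (g - 1) (l - 1) := by
  have hlδ : l - 1 ≤ max f l - 1 := Nat.sub_le_sub_right (le_max_right f l) 1
  have hfδ : f - 1 ≤ max f l - 1 := Nat.sub_le_sub_right (le_max_left f l) 1
  refine ⟨hlδ, ?_⟩
  intro x hx kx hkx k hkΩ hmax x' hx' hagree
  by_contra hcon
  push_neg at hcon
  have hbgk : max b g - 1 ≤ k := le_trans (le_max_right _ _) hmax
  have hbk : b - 1 ≤ k := le_trans (Nat.sub_le_sub_right (le_max_left b g) 1) hbgk
  have hgk : g - 1 ≤ k := le_trans (Nat.sub_le_sub_right (le_max_right b g) 1) hbgk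
  have hSst : ∀ m, m ≤ k → (x m, x' m) ∈ M.Sstar := by
    intro m hm
    exact ⟨m + 1, by omega, x, x', fun h _ => hx.2 h, fun h _ => hx'.2 h, hx.1, hx'.1,
      rfl, rfl, fun h hh => (hagree h (by omega)).symm⟩
  have hB : (x k, x' k) ∈ M.Bset M.Sstar b := by
    refine ⟨fun h => x (k - (b - 1) + h), fun h => x' (k - (b - 1) + h),
      fun h _ => hx.2 (k - (b - 1) + h), fun h _ => hx'.2 (k - (b - 1) + h), ?_, ?_,
      fun h hh => hSst _ (by omega), fun h hh => (hagree _ (by omega)).symm⟩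
    · show x (k - (b - 1) + (b - 1)) = x k
      congr 1; omega
    · show x' (k - (b - 1) + (b - 1)) = x' k
      congr 1; omega
  have hF : (x k, x' k) ∈ M.Fset f :=
    ⟨fun h => x (k + h), fun h => x' (k + h), fun h _ => hx.2 (k + h),
     fun h _ => hx'.2 (k + h), rfl, rfl, fun h hh => (hagree (k + h) (by omega)).symm⟩
  have hG : (x k, x' k) ∈ M.Gset Ω g := by
    refine ⟨hSst k le_rfl, fun h => x (k - (g - 1) + h), fun h => x' (k - (g - 1) + h),
      fun h _ => hx.2 (k - (g - 1) + h), fun h _ => hx'.2 (k - (g - 1) + h), ?_, ?_,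
      fun h hh => (hagree _ (by omega)).symm, fun h hh => hSst _ (by omega),
      Or.inl ⟨hkΩ, hcon k (by omega) (by omega),
        fun h hh => hcon (k - (g - 1) + h) (by omega) (by omega)⟩⟩
    · show x (k - (g - 1) + (g - 1)) = x k
      congr 1; omega
    · show x' (k - (g - 1) + (g - 1)) = x' k
      congr 1; omega
  have hL : (x k, x' k) ∈ M.Lset Ω l := by
    exact ⟨hSst k le_rfl, fun h => x (k + h), fun h => x' (k + h),
      fun h _ => hx.2 (k + h), fun h _ => hx'.2 (k + h), rfl, rfl,
      fun h hh => (hagree (k + h) (by omega)).symm,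
      Or.inl ⟨hkΩ, hcon k (by omega) (by omega),
        fun h hh => hcon (k + h) (by omega) (by omega)⟩⟩
  exact hsub ⟨hB, hF⟩ ⟨hG, hL⟩

/-! ### Converse direction -/

lemma build_exec (M : FSM X Y) (σ : X → X) (hσ : ∀ i, M.Tr i (σ i))
    (y u v : ℕ → X) (n g l : ℕ) (hn : 1 ≤ n) (hg : 2 ≤ g) (hl : 2 ≤ l)
    (hy : M.IsFinExec y n) (hu : M.IsFinExec u g) (hv : M.IsFinExec v l)
    (hy0 : y 0 ∈ M.X0) (hyu : y (n - 1) = u 0) (huv : u (g - 1) = v 0) :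
    ∃ x : ℕ → X, M.IsExec x ∧ (∀ m, m < n → x m = y m) ∧
      (∀ t, t < g → x (n - 1 + t) = u t) ∧ (∀ t, t < l → x (n - 1 + (g - 1) + t) = v t) := by
  classical
  set x : ℕ → X := fun m =>
    if m < n then y m else if m < n + (g - 1) then u (m - (n - 1))
    else if m < n + (g - 1) + (l - 1) then v (m - (n - 1) - (g - 1))
    else σ^[m - (n - 1) - (g - 1) - (l - 1)] (v (l - 1)) with hxdef
  have hv1 : ∀ m, m < n → x m = y m := by
    intro m hm
    simp only [hxdef]
    rw [if_pos hm]
  have hv2 : ∀ t, t < g → x (n - 1 + t) = u t := by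
    intro t ht
    rcases Nat.eq_zero_or_pos t with rfl | htpos
    · have h1 : n - 1 + 0 < n := by omega
      simp only [hxdef]
      rw [if_pos h1]
      show y (n - 1 + 0) = u 0
      rw [show n - 1 + 0 = n - 1 from by omega]
      exact hyu
    · have h1 : ¬ (n - 1 + t < n) := by omega
      have h2 : n - 1 + t < n + (g - 1) := by omega
      simp only [hxdef]
      rw [if_neg h1, if_pos h2]
      congr 1
      omega
  have hv3 : ∀ t, t < l → x (n - 1 + (g - 1) + t) = v t := by
    intro t ht
    rcases Nat.eq_zero_or_pos t with rfl | htpos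
    · have h1 : ¬ (n - 1 + (g - 1) + 0 < n) := by omega
      have h2 : n - 1 + (g - 1) + 0 < n + (g - 1) := by omega
      simp only [hxdef]
      rw [if_neg h1, if_pos h2, show n - 1 + (g - 1) + 0 - (n - 1) = g - 1 from by omega]
      exact huv
    · have h1 : ¬ (n - 1 + (g - 1) + t < n) := by omega
      have h2 : ¬ (n - 1 + (g - 1) + t < n + (g - 1)) := by omega
      have h3 : n - 1 + (g - 1) + t < n + (g - 1) + (l - 1) := by omega
      simp only [hxdef]
      rw [if_neg h1, if_neg h2, if_pos h3]
      congr 1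
      omega
  have hv4 : ∀ s, x (n - 1 + (g - 1) + (l - 1) + s) = σ^[s] (v (l - 1)) := by
    intro s
    rcases Nat.eq_zero_or_pos s with rfl | hspos
    · rw [show n - 1 + (g - 1) + (l - 1) + 0 = n - 1 + (g - 1) + (l - 1) from by omega]
      rw [hv3 (l - 1) (by omega)]
      simp
    · have h1 : ¬ (n - 1 + (g - 1) + (l - 1) + s < n) := by omega
      have h2 : ¬ (n - 1 + (g - 1) + (l - 1) + s < n + (g - 1)) := by omega
      have h3 : ¬ (n - 1 + (g - 1) + (l - 1) + s < n + (g - 1) + (l - 1)) := by omega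
      simp only [hxdef]
      rw [if_neg h1, if_neg h2, if_neg h3]
      congr 1
      omega
  refine ⟨x, ⟨?_, ?_⟩, hv1, hv2, hv3⟩
  · rw [hv1 0 (by omega)]
    exact hy0
  · intro m
    rcases lt_or_ge (m + 1) n with h | h
    · rw [hv1 m (by omega), hv1 (m + 1) h]
      exact hy m h
    rcases lt_or_ge (m + 1) (n - 1 + g) with h2 | h2
    · have h3 : m - (n - 1) + 1 < g := by omega
      rw [show m = n - 1 + (m - (n - 1)) from by omega, hv2 _ (by omega),
        show n - 1 + (m - (n - 1)) + 1 = n - 1 + (m - (n - 1) + 1) from by omega, hv2 _ h3]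
      exact hu _ h3
    rcases lt_or_ge (m + 1) (n - 1 + (g - 1) + l) with h3 | h3
    · have h4 : m - (n - 1) - (g - 1) + 1 < l := by omega
      rw [show m = n - 1 + (g - 1) + (m - (n - 1) - (g - 1)) from by omega, hv3 _ (by omega),
        show n - 1 + (g - 1) + (m - (n - 1) - (g - 1)) + 1
          = n - 1 + (g - 1) + (m - (n - 1) - (g - 1) + 1) from by omega, hv3 _ h4]
      exact hv _ h4
    · rw [show m = n - 1 + (g - 1) + (l - 1) + (m - (n - 1 + (g - 1) + (l - 1))) from by omega,
        hv4 _, show n - 1 + (g - 1) + (l - 1) + (m - (n - 1 + (g - 1) + (l - 1))) + 1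
          = n - 1 + (g - 1) + (l - 1) + (m - (n - 1 + (g - 1) + (l - 1)) + 1) from by omega,
        hv4 _, Function.iterate_succ_apply']
      exact hσ _

lemma no_confusion_aux (M : FSM X Y) (hlive : M.Live) (Ω : Set X)
    {τ δ γ₁ γ₂ : ℕ} (hd : M.EventDiagWith Ω τ δ γ₁ γ₂)
    (i j : X) (hi : i ∈ Ω)
    (n g l : ℕ) (hn : 1 ≤ n) (hg2 : 2 ≤ g) (hgτ : τ + 1 ≤ g) (hgγ : γ₁ + 1 ≤ g)
    (hl2 : 2 ≤ l) (hlδ : δ + 1 ≤ l) (hlγ : γ₂ + 1 ≤ l)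
    (y₁ y₂ u₁ u₂ v₁ v₂ : ℕ → X)
    (hy₁ : M.IsFinExec y₁ n) (hy₂ : M.IsFinExec y₂ n)
    (hy₁0 : y₁ 0 ∈ M.X0) (hy₂0 : y₂ 0 ∈ M.X0)
    (hyind : M.Indist y₁ y₂ n)
    (hu₁ : M.IsFinExec u₁ g) (hu₂ : M.IsFinExec u₂ g)
    (hy₁u : y₁ (n - 1) = u₁ 0) (hy₂u : y₂ (n - 1) = u₂ 0)
    (huind : M.Indist u₁ u₂ g)
    (hu₁e : u₁ (g - 1) = i) (hu₂e : u₂ (g - 1) = j)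
    (hu₂Ω : ∀ t, t < g → u₂ t ∉ Ω)
    (hv₁ : M.IsFinExec v₁ l) (hv₂ : M.IsFinExec v₂ l)
    (hv₁0 : v₁ 0 = i) (hv₂0 : v₂ 0 = j)
    (hvind : M.Indist v₁ v₂ l)
    (hv₂Ω : ∀ t, t < l → v₂ t ∉ Ω) : False := by
  classical
  obtain ⟨σ, hσ⟩ : ∃ σ : X → X, ∀ i, M.Tr i (σ i) :=
    ⟨fun i => Classical.choose (hlive i), fun i => Classical.choose_spec (hlive i)⟩
  obtain ⟨x, hx, hxv1, hxv2, hxv3⟩ := M.build_exec σ hσ y₁ u₁ v₁ n g l hn hg2 hl2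
    hy₁ hu₁ hv₁ hy₁0 hy₁u (hu₁e.trans hv₁0.symm)
  obtain ⟨x', hx', hx'v1, hx'v2, hx'v3⟩ := M.build_exec σ hσ y₂ u₂ v₂ n g l hn hg2 hl2
    hy₂ hu₂ hv₂ hy₂0 hy₂u (hu₂e.trans hv₂0.symm)
  set k := n - 1 + (g - 1) with hkdef
  have hxk : x k ∈ Ω := by
    rw [hkdef, hxv2 (g - 1) (by omega), hu₁e]
    exact hi
  have hEx : ∃ h, x h ∈ Ω := ⟨k, hxk⟩
  have hkx1 : x (Nat.find hEx) ∈ Ω := Nat.find_spec hEx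
  have hkx2 : ∀ h, h < Nat.find hEx → x h ∉ Ω := fun h hh => Nat.find_min hEx hh
  have hkxk : Nat.find hEx ≤ k := Nat.find_min' hEx hxk
  have hagree : M.AgreeUpTo x x' (k + δ) := by
    intro m hm
    rcases lt_or_ge m n with h1 | h1
    · rw [hxv1 m h1, hx'v1 m h1]
      exact (hyind m h1).symm
    rcases le_or_gt m k with h2 | h2
    · have ht : m - (n - 1) < g := by omega
      rw [show m = n - 1 + (m - (n - 1)) from by omega, hxv2 _ ht, hx'v2 _ ht]
      exact (huind _ ht).symm
    · have ht : m - (n - 1) - (g - 1) < l := by omega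
      rw [show m = n - 1 + (g - 1) + (m - (n - 1) - (g - 1)) from by omega,
        hxv3 _ ht, hx'v3 _ ht]
      exact (hvind _ ht).symm
  obtain ⟨h, hh1, hh2, hhΩ⟩ := hd.2 x hx (Nat.find hEx) ⟨hkx1, hkx2⟩ k hxk
    (max_le hkxk (by omega)) x' hx' hagree
  rcases le_or_gt h k with hc | hc
  · have ht : h - (n - 1) < g := by omega
    have : x' h ∉ Ω := by
      rw [show h = n - 1 + (h - (n - 1)) from by omega, hx'v2 _ ht]
      exact hu₂Ω _ ht
    exact this hhΩ
  · have ht : h - (n - 1) - (g - 1) < l := by omega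
    have : x' h ∉ Ω := by
      rw [show h = n - 1 + (g - 1) + (h - (n - 1) - (g - 1)) from by omega, hx'v3 _ ht]
      exact hv₂Ω _ ht
    exact this hhΩ

lemma GL_empty (M : FSM X Y) (hlive : M.Live) (Ω : Set X)
    {τ δ γ₁ γ₂ : ℕ} (hd : M.EventDiagWith Ω τ δ γ₁ γ₂) :
    ∀ p : X × X, p ∈ M.Gstar Ω → p ∈ M.Lstar Ω → False := by
  rintro p ⟨hpS, hG⟩ ⟨-, hL⟩
  obtain ⟨g, hgK, hpg⟩ := hG (max (max (τ + 1) (γ₁ + 1)) 2)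
  obtain ⟨l, hlK, hpl⟩ := hL (max (max (δ + 1) (γ₂ + 1)) 2)
  have hg2 : 2 ≤ g := le_trans (le_max_right _ _) hgK
  have hgτ : τ + 1 ≤ g := le_trans (le_trans (le_max_left _ _) (le_max_left _ _)) hgK
  have hgγ : γ₁ + 1 ≤ g := le_trans (le_trans (le_max_right _ _) (le_max_left _ _)) hgK
  have hl2 : 2 ≤ l := le_trans (le_max_right _ _) hlK
  have hlδ : δ + 1 ≤ l := le_trans (le_trans (le_max_left _ _) (le_max_left _ _)) hlK
  have hlγ : γ₂ + 1 ≤ l := le_trans (le_trans (le_max_right _ _) (le_max_left _ _)) hlK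
  obtain ⟨-, u₁, u₂, hu₁, hu₂, hu₁e, hu₂e, huind, huS, hudisj⟩ := hpg
  obtain ⟨-, v₁, v₂, hv₁, hv₂, hv₁0, hv₂0, hvind, hvdisj⟩ := hpl
  obtain ⟨n, hn, y₁, y₂, hy₁, hy₂, hy₁0, hy₂0, hy₁e, hy₂e, hyind⟩ := huS 0 (by omega)
  rcases hudisj with ⟨h1, h2, hav⟩ | ⟨h1, h2, hav⟩
  · rcases hvdisj with ⟨-, -, hav'⟩ | ⟨hc, -, -⟩
    · exact M.no_confusion_aux hlive Ω hd p.1 p.2 h1 n g l hn hg2 hgτ hgγ hl2 hlδ hlγ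
        y₁ y₂ u₁ u₂ v₁ v₂ hy₁ hy₂ hy₁0 hy₂0 hyind hu₁ hu₂ hy₁e hy₂e huind hu₁e hu₂e hav
        hv₁ hv₂ hv₁0 hv₂0 hvind hav'
    · exact h2 hc
  · rcases hvdisj with ⟨hc, -, -⟩ | ⟨-, -, hav'⟩
    · exact h2 hc
    · exact M.no_confusion_aux hlive Ω hd p.2 p.1 h1 n g l hn hg2 hgτ hgγ hl2 hlδ hlγ
        y₂ y₁ u₂ u₁ v₂ v₁ hy₂ hy₁ hy₂0 hy₁0 (fun m hm => (hyind m hm).symm)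
        hu₂ hu₁ hy₂e hy₁e (fun m hm => (huind m hm).symm) hu₂e hu₁e hav
        hv₂ hv₁ hv₂0 hv₁0 (fun m hm => (hvind m hm).symm) hav'

end FSM

/-- Corollary 4.7: if B_b(S*) ∩ F_f ⊆ (Γ_g ∩ Λ_l)ᶜ for some
b ∈ [1, b*], f ∈ [1, f*], g ∈ [1, g*], l ∈ [1, l*], then M is eventually
Ω-diagnosable with τ = max{b,g}-1, δ = max{f,l}-1, γ₁ = g-1, γ₂ = l-1; conversely,
if M is eventually Ω-diagnosable such b, f, g, l exist. -/
theorem event_diag_inclusion {X Y : Type*} [Fintype X] (M : FSM X Y) (hlive : M.Live)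
    (Ω : Set X) :
    (∀ b f g l : ℕ, 1 ≤ b → b ≤ M.bIdx M.Sstar → 1 ≤ f → f ≤ M.fIdx →
      1 ≤ g → g ≤ M.gIdx Ω → 1 ≤ l → l ≤ M.lIdx Ω →
      M.Bset M.Sstar b ∩ M.Fset f ⊆ (M.Gset Ω g ∩ M.Lset Ω l)ᶜ →
      M.EventDiagWith Ω (max b g - 1) (max f l - 1) (g - 1) (l - 1)) ∧
    (M.EventDiag Ω →
      ∃ b f g l : ℕ, 1 ≤ b ∧ b ≤ M.bIdx M.Sstar ∧ 1 ≤ f ∧ f ≤ M.fIdx ∧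
        1 ≤ g ∧ g ≤ M.gIdx Ω ∧ 1 ≤ l ∧ l ≤ M.lIdx Ω ∧
        M.Bset M.Sstar b ∩ M.Fset f ⊆ (M.Gset Ω g ∩ M.Lset Ω l)ᶜ) := by
  constructor
  · intro b f g l hb _ hf _ hg _ hl _ hsub
    exact M.forward_lemma Ω b f g l hb hf hg hl hsub
  · rintro ⟨τ, δ, γ₁, γ₂, hd⟩
    have hbmem : 1 ≤ M.bIdx M.Sstar ∧ M.Bset M.Sstar (M.bIdx M.Sstar) = M.Bstar M.Sstar :=
      Nat.sInf_mem (M.exists_B_eq M.Sstar)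
    have hfmem : 1 ≤ M.fIdx ∧ M.Fset M.fIdx = M.Fstar := Nat.sInf_mem M.exists_F_eq
    have hgmem : 1 ≤ M.gIdx Ω ∧ M.Gset Ω (M.gIdx Ω) = M.Gstar Ω :=
      Nat.sInf_mem (M.exists_G_eq Ω)
    have hlmem : 1 ≤ M.lIdx Ω ∧ M.Lset Ω (M.lIdx Ω) = M.Lstar Ω :=
      Nat.sInf_mem (M.exists_L_eq Ω)
    refine ⟨M.bIdx M.Sstar, M.fIdx, M.gIdx Ω, M.lIdx Ω, hbmem.1, le_rfl, hfmem.1, le_rfl,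
      hgmem.1, le_rfl, hlmem.1, le_rfl, ?_⟩
    intro p _ hpGL
    rw [Set.mem_inter_iff, hgmem.2, hlmem.2] at hpGL
    exact M.GL_empty hlive Ω hd p hpGL.1 hpGL.2
end

section
/- M is eventually Ω-diagnosable with uncertainty radius γ = 0 if and only if there exist b and f such that B_b(S*) ∩ F_f ⊆ (Ω × Ω) ∪ (Ω̄ × Ω̄). -/
open Set

section Aux

variable {X Y : Type*}

/-- Extend a finite execution to an infinite one using liveness. -/
noncomputable def extE (M : FSM X Y) (hlive : M.Live) (v : ℕ → X) (n : ℕ) : ℕ → X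
  | 0 => v 0
  | m + 1 => if m + 1 < n then v (m + 1) else Classical.choose (hlive (extE M hlive v n m))

lemma extE_lt (M : FSM X Y) (hlive : M.Live) (v : ℕ → X) (n : ℕ) :
    ∀ m < n, extE M hlive v n m = v m := by
  intro m hm
  cases m with
  | zero => rfl
  | succ m => simp [extE, hm]

lemma extE_exec (M : FSM X Y) (hlive : M.Live) (v : ℕ → X) (n : ℕ)
    (hn : 1 ≤ n) (hfe : M.IsFinExec v n) (h0 : v 0 ∈ M.X0) :
    M.IsExec (extE M hlive v n) := by
  refine ⟨?_, ?_⟩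
  · exact h0
  · intro m
    by_cases h : m + 1 < n
    · have e1 : extE M hlive v n (m + 1) = v (m + 1) := by simp [extE, h]
      have e0 : extE M hlive v n m = v m := extE_lt M hlive v n m (by omega)
      rw [e0, e1]; exact hfe m h
    · have e1 : extE M hlive v n (m + 1)
          = Classical.choose (hlive (extE M hlive v n m)) := by
        simp [extE, h]
      rw [e1]; exact Classical.choose_spec (hlive _)

lemma key_lemma (M : FSM X Y) (hlive : M.Live) (Ω : Set X) (τ δ : ℕ)
    (hd : M.EventDiagWith Ω τ δ 0 0)
    (i j : X) (n : ℕ) (hn : 1 ≤ n)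
    (z₁ z₂ y₁ y₂ w₁ w₂ : ℕ → X)
    (hz₁ : M.IsFinExec z₁ n) (hz₂ : M.IsFinExec z₂ n)
    (hz₁0 : z₁ 0 ∈ M.X0) (hz₂0 : z₂ 0 ∈ M.X0)
    (hz₁e : z₁ (n - 1) = y₁ 0) (hz₂e : z₂ (n - 1) = y₂ 0)
    (hzI : M.Indist z₁ z₂ n)
    (hy₁ : M.IsFinExec y₁ (τ + 1)) (hy₂ : M.IsFinExec y₂ (τ + 1))
    (hy₁e : y₁ τ = i) (hy₂e : y₂ τ = j)
    (hyI : M.Indist y₁ y₂ (τ + 1))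
    (hw₁ : M.IsFinExec w₁ (δ + 1)) (hw₂ : M.IsFinExec w₂ (δ + 1))
    (hw₁0 : w₁ 0 = i) (hw₂0 : w₂ 0 = j)
    (hwI : M.Indist w₁ w₂ (δ + 1))
    (hi : i ∈ Ω) : j ∈ Ω := by
  classical
  set N : ℕ := n + τ with hN
  -- the spliced finite execution
  set mk : (ℕ → X) → (ℕ → X) → (ℕ → X) → ℕ → X :=
    fun z y w m => if m < n then z m else if m < N then y (m - (n - 1))
      else w (m - (N - 1)) with hmk
  have val_y : ∀ (z y w : ℕ → X), z (n - 1) = y 0 →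
      ∀ m, n - 1 ≤ m → m ≤ N - 1 → mk z y w m = y (m - (n - 1)) := by
    intro z y w hzy m h1 h2
    by_cases h : m < n
    · have hm : m = n - 1 := by omega
      have : m - (n - 1) = 0 := by omega
      have e : mk z y w m = z m := by simp [hmk, h]
      rw [e, this, hm]; exact hzy
    · have h' : m < N := by omega
      simp [hmk, h, h']
  have val_w : ∀ (z y w : ℕ → X), z (n - 1) = y 0 → y τ = w 0 →
      ∀ m, N - 1 ≤ m → mk z y w m = w (m - (N - 1)) := by
    intro z y w hzy hyw m h1
    by_cases h : m < n
    · have hm : m = n - 1 := by omega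
      have hτ : τ = 0 := by omega
      have e0 : m - (N - 1) = 0 := by omega
      have hyw0 : y 0 = w 0 := by rw [← hτ] at hyw ⊢; exact hyw
      have e : mk z y w m = z m := by simp [hmk, h]
      rw [e, e0, hm, hzy]; exact hyw0
    · by_cases h' : m < N
      · have hm : m = N - 1 := by omega
        have e1 : m - (n - 1) = τ := by omega
        have e0 : m - (N - 1) = 0 := by omega
        have e : mk z y w m = y (m - (n - 1)) := by simp [hmk, h, h']
        rw [e, e1, e0]; exact hyw
      · simp [hmk, h, h']
  have fexec : ∀ (z y w : ℕ → X), M.IsFinExec z n → M.IsFinExec y (τ + 1) →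
      M.IsFinExec w (δ + 1) → z (n - 1) = y 0 → y τ = w 0 →
      M.IsFinExec (mk z y w) (N + δ) := by
    intro z y w hz hy hw hzy hyw m hm
    by_cases h1 : m + 1 < n
    · have h0 : m < n := by omega
      have e0 : mk z y w m = z m := by simp [hmk, h0]
      have e1 : mk z y w (m + 1) = z (m + 1) := by simp [hmk, h1]
      rw [e0, e1]; exact hz m h1
    · by_cases h2 : m + 1 < N
      · have e0 : mk z y w m = y (m - (n - 1)) := val_y z y w hzy m (by omega) (by omega)
        have e1 : mk z y w (m + 1) = y (m + 1 - (n - 1)) :=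
          val_y z y w hzy (m + 1) (by omega) (by omega)
        have e2 : m + 1 - (n - 1) = (m - (n - 1)) + 1 := by omega
        rw [e0, e1, e2]
        exact hy _ (by omega)
      · have e0 : mk z y w m = w (m - (N - 1)) := val_w z y w hzy hyw m (by omega)
        have e1 : mk z y w (m + 1) = w (m + 1 - (N - 1)) :=
          val_w z y w hzy hyw (m + 1) (by omega)
        have e2 : m + 1 - (N - 1) = (m - (N - 1)) + 1 := by omega
        rw [e0, e1, e2]
        exact hw _ (by omega)
  have hy₁w : y₁ τ = w₁ 0 := by rw [hy₁e, hw₁0]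
  have hy₂w : y₂ τ = w₂ 0 := by rw [hy₂e, hw₂0]
  set v : ℕ → X := mk z₁ y₁ w₁ with hv
  set v' : ℕ → X := mk z₂ y₂ w₂ with hv'
  have hvfe : M.IsFinExec v (N + δ) := fexec _ _ _ hz₁ hy₁ hw₁ hz₁e hy₁w
  have hv'fe : M.IsFinExec v' (N + δ) := fexec _ _ _ hz₂ hy₂ hw₂ hz₂e hy₂w
  have hind : M.Indist v v' (N + δ) := by
    intro m hm
    by_cases h1 : m < n
    · show M.H (mk z₁ y₁ w₁ m) = M.H (mk z₂ y₂ w₂ m)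
      simp only [hmk, if_pos h1]
      exact hzI m h1
    · by_cases h2 : m < N
      · rw [show v m = y₁ (m - (n - 1)) from val_y _ _ _ hz₁e m (by omega) (by omega),
          show v' m = y₂ (m - (n - 1)) from val_y _ _ _ hz₂e m (by omega) (by omega)]
        exact hyI _ (by omega)
      · rw [show v m = w₁ (m - (N - 1)) from val_w _ _ _ hz₁e hy₁w m (by omega),
          show v' m = w₂ (m - (N - 1)) from val_w _ _ _ hz₂e hy₂w m (by omega)]
        exact hwI _ (by omega)
  have hNδ : 1 ≤ N + δ := by omega
  set x : ℕ → X := extE M hlive v (N + δ) with hx_def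
  set x' : ℕ → X := extE M hlive v' (N + δ) with hx'_def
  have h0n : 0 < n := hn
  have hv0 : v 0 = z₁ 0 := by simp [hv, hmk, h0n]
  have hv'0 : v' 0 = z₂ 0 := by simp [hv', hmk, h0n]
  have hx : M.IsExec x := extE_exec M hlive v (N + δ) hNδ hvfe (by rw [hv0]; exact hz₁0)
  have hx' : M.IsExec x' := extE_exec M hlive v' (N + δ) hNδ hv'fe (by rw [hv'0]; exact hz₂0)
  set k : ℕ := N - 1 with hk
  have hkN : k < N + δ := by omega
  have hvk : v k = i := by
    rw [show v k = w₁ (k - (N - 1)) from val_w _ _ _ hz₁e hy₁w k (by omega)]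
    rw [show k - (N - 1) = 0 from by omega, hw₁0]
  have hv'k : v' k = j := by
    rw [show v' k = w₂ (k - (N - 1)) from val_w _ _ _ hz₂e hy₂w k (by omega)]
    rw [show k - (N - 1) = 0 from by omega, hw₂0]
  have hxk : x k ∈ Ω := by
    rw [hx_def, extE_lt M hlive v (N + δ) k hkN, hvk]; exact hi
  have hex : ∃ h, x h ∈ Ω := ⟨k, hxk⟩
  set kx : ℕ := Nat.find hex with hkx
  have hfc : FSM.FirstCross Ω x kx := ⟨Nat.find_spec hex, fun h hh => Nat.find_min hex hh⟩
  have hkxle : kx ≤ k := Nat.find_min' hex hxk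
  have hmax : max kx τ ≤ k := max_le hkxle (by omega)
  have hagree : M.AgreeUpTo x x' (k + δ) := by
    intro m hm
    have hmlt : m < N + δ := by omega
    rw [hx_def, hx'_def, extE_lt M hlive v (N + δ) m hmlt,
      extE_lt M hlive v' (N + δ) m hmlt]
    exact (hind m hmlt).symm
  obtain ⟨h, hh1, hh2, hhΩ⟩ := hd.2 x hx kx hfc k hxk hmax x' hx' hagree
  have : h = k := by omega
  subst this
  rw [hx'_def, extE_lt M hlive v' (N + δ) k hkN, hv'k] at hhΩ
  exact hhΩ

end Aux

/-- Corollary 4.9, case γ = 0: M is eventually Ω-diagnosable with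
uncertainty radius γ = 0 iff there exist b and f such that
B_b(S*) ∩ F_f ⊆ (Ω × Ω) ∪ (Ω̄ × Ω̄). -/
theorem event_diag_zero_uncertainty {X Y : Type*} (M : FSM X Y) (hlive : M.Live)
    (Ω : Set X) :
    (∃ τ δ : ℕ, M.EventDiagWith Ω τ δ 0 0) ↔
      ∃ b f : ℕ, 1 ≤ b ∧ 1 ≤ f ∧
        M.Bset M.Sstar b ∩ M.Fset f ⊆ (Ω ×ˢ Ω) ∪ (Ωᶜ ×ˢ Ωᶜ) := by
  constructor
  · rintro ⟨τ, δ, hd⟩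
    refine ⟨τ + 1, δ + 1, by omega, by omega, ?_⟩
    rintro ⟨i, j⟩ ⟨hB, hF⟩
    obtain ⟨y₁, y₂, hy₁, hy₂, hy₁e, hy₂e, hS, hyI⟩ := hB
    obtain ⟨w₁, w₂, hw₁, hw₂, hw₁0, hw₂0, hwI⟩ := hF
    obtain ⟨n, hn, z₁, z₂, hz₁, hz₂, hz₁0, hz₂0, hz₁e, hz₂e, hzI⟩ := hS 0 (by omega)
    simp only [Nat.add_sub_cancel] at hy₁e hy₂e
    by_cases hi : i ∈ Ω
    · exact Or.inl ⟨hi, key_lemma M hlive Ω τ δ hd i j n hn z₁ z₂ y₁ y₂ w₁ w₂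
        hz₁ hz₂ hz₁0 hz₂0 hz₁e hz₂e hzI hy₁ hy₂ hy₁e hy₂e hyI hw₁ hw₂ hw₁0 hw₂0 hwI hi⟩
    · by_cases hj : j ∈ Ω
      · exact absurd (key_lemma M hlive Ω τ δ hd j i n hn z₂ z₁ y₂ y₁ w₂ w₁
          hz₂ hz₁ hz₂0 hz₁0 hz₂e hz₁e (fun h hh => (hzI h hh).symm)
          hy₂ hy₁ hy₂e hy₁e (fun h hh => (hyI h hh).symm)
          hw₂ hw₁ hw₂0 hw₁0 (fun h hh => (hwI h hh).symm) hj) hi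
      · exact Or.inr ⟨hi, hj⟩
  · rintro ⟨b, f, hb, hf, hsub⟩
    refine ⟨b - 1, f - 1, Nat.zero_le _, ?_⟩
    intro x hx kx hfc k hkΩ hmax x' hx' hagree
    refine ⟨k, by omega, by omega, ?_⟩
    have hτk : b - 1 ≤ k := le_trans (le_max_right _ _) hmax
    have hmem : (x k, x' k) ∈ M.Bset M.Sstar b ∩ M.Fset f := by
      constructor
      · refine ⟨fun h => x (k - (b - 1) + h), fun h => x' (k - (b - 1) + h),
          fun m hm => hx.2 _, fun m hm => hx'.2 _, ?_, ?_, ?_, ?_⟩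
        · show x (k - (b - 1) + (b - 1)) = x k
          congr 1; omega
        · show x' (k - (b - 1) + (b - 1)) = x' k
          congr 1; omega
        · intro h hh
          refine ⟨k - (b - 1) + h + 1, by omega, x, x',
            fun m _ => hx.2 m, fun m _ => hx'.2 m, hx.1, hx'.1, rfl, rfl, ?_⟩
          intro m hm
          exact (hagree m (by omega)).symm
        · intro h hh
          exact (hagree (k - (b - 1) + h) (by omega)).symm
      · refine ⟨fun h => x (k + h), fun h => x' (k + h),
          fun m hm => hx.2 _, fun m hm => hx'.2 _, rfl, rfl, ?_⟩
        intro h hh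
        exact (hagree (k + h) (by omega)).symm
    rcases hsub hmem with ⟨_, h2⟩ | ⟨h1, _⟩
    · exact h2
    · exact absurd hkΩ h1
end

section
/- M is critically Ω-observable (eventually Ω-diagnosable with δ = 0 and τ = 0) if and only if S* ⊆ (Ω × Ω) ∪ (Ω̄ × Ω̄). -/
open Set

/-- Extend a finite execution to an infinite one using liveness. -/
lemma FSM.extend_finexec {X Y : Type*} (M : FSM X Y) (hlive : M.Live)
    (x : ℕ → X) (n : ℕ) (hn : 1 ≤ n) (hfin : M.IsFinExec x n) (h0 : x 0 ∈ M.X0) :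
    ∃ y : ℕ → X, M.IsExec y ∧ ∀ m < n, y m = x m := by
  classical
  choose succ hsucc using hlive
  let y : ℕ → X := fun m => Nat.rec (x 0)
    (fun k yk => if k + 1 < n then x (k + 1) else succ yk) m
  have hagree : ∀ m < n, y m = x m := by
    intro m hm
    cases m with
    | zero => rfl
    | succ k => simp only [y, Nat.rec_add_one, if_pos hm]
  refine ⟨y, ⟨?_, ?_⟩, hagree⟩
  · have := hagree 0 hn; rw [this]; exact h0
  · intro k
    by_cases hk : k + 1 < n
    · rw [hagree k (Nat.lt_of_succ_lt hk), hagree (k + 1) hk]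
      · exact hfin k hk
    · have : y (k + 1) = succ (y k) := by
        simp only [y, Nat.rec_add_one, if_neg hk]
      rw [this]; exact hsucc _

/-- Proposition 4.11, case δ = 0 and τ = 0: M is critically
Ω-observable iff S* ⊆ (Ω × Ω) ∪ (Ω̄ × Ω̄). -/
theorem crit_obs_characterization {X Y : Type*} (M : FSM X Y) (hlive : M.Live)
    (Ω : Set X) :
    M.CritObs Ω ↔ M.Sstar ⊆ (Ω ×ˢ Ω) ∪ (Ωᶜ ×ˢ Ωᶜ) := by
  constructor
  · rintro hobs ⟨i, j⟩ ⟨n, hn, x₁, x₂, hf₁, hf₂, h01, h02, he1, he2, hind⟩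
    obtain ⟨y₁, hy₁, ha₁⟩ := M.extend_finexec hlive x₁ n hn hf₁ h01
    obtain ⟨y₂, hy₂, ha₂⟩ := M.extend_finexec hlive x₂ n hn hf₂ h02
    have hk : n - 1 < n := Nat.sub_lt hn Nat.one_pos
    have ind12 : M.AgreeUpTo y₁ y₂ (n - 1) := by
      intro m hm
      have hm' : m < n := lt_of_le_of_lt hm hk
      rw [ha₁ m hm', ha₂ m hm']
      exact (hind m hm').symm
    have ind21 : M.AgreeUpTo y₂ y₁ (n - 1) := fun m hm => (ind12 m hm).symm
    have e1 : y₁ (n - 1) = i := by rw [ha₁ _ hk]; exact he1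
    have e2 : y₂ (n - 1) = j := by rw [ha₂ _ hk]; exact he2
    by_cases hi : i ∈ Ω
    · left
      refine ⟨hi, ?_⟩
      have := hobs y₁ hy₁ (n - 1) (by rw [e1]; exact hi) y₂ hy₂ ind12
      rwa [e2] at this
    · right
      refine ⟨hi, fun hj => hi ?_⟩
      have := hobs y₂ hy₂ (n - 1) (by rw [e2]; exact hj) y₁ hy₁ ind21
      rwa [e1] at this
  · intro hsub x hx k hk x' hx' hagree
    have hmem : (x k, x' k) ∈ M.Sstar := by
      refine ⟨k + 1, Nat.le_add_left 1 k, x, x', ?_, ?_, hx.1, hx'.1, rfl, rfl, ?_⟩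
      · exact fun h _ => hx.2 h
      · exact fun h _ => hx'.2 h
      · intro h hh
        exact (hagree h (Nat.lt_succ_iff.mp hh)).symm
    rcases hsub hmem with h | h
    · exact h.2
    · exact absurd hk h.1
end
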